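/- arXiv:2111.05961 — 9 statements merged into one kernel-verified Lean document; each statement's English description precedes it below -/
import Mathlib

section
/- Let q be a prime power and suppose M is a (q-1)×(q-1) matrix over F_q with all entries nonzero and all 2×2 submatrices invertible. Fix a primitive element α of F_q and write m_{i,j} = α^{d_{i,j}} with d_{i,j} ∈ Z_{q-1}. Then the matrix D = (d_{i,j}) is a (q-1, q-1; 1)-difference matrix over Z_{q-1}: for any two distinct rows i and j, the map k ↦ d_{i,k} − d_{j,k} is a bijection from the column index set to Z_{q-1}. -/
/-- If M is a (q-1)×(q-1) matrix over F_q with all entries nonzero and all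
2×2 submatrices invertible, α a primitive element of F_q, and m_{i,j} = α^{d_{i,j}} with
d_{i,j} ∈ Z_{q-1}, then D = (d_{i,j}) is a (q-1,q-1;1)-difference matrix over Z_{q-1}. -/
theorem stmt2 {q : ℕ} (F : Type) [Field F] [Fintype F] (hcard : Fintype.card F = q)
    (α : F) (hα : ∀ x : F, x ≠ 0 → ∃ n : ℕ, α ^ n = x)
    (M : Matrix (Fin (q - 1)) (Fin (q - 1)) F)
    (hnz : ∀ i j, M i j ≠ 0)
    (h22 : ∀ i j k l, i ≠ j → k ≠ l → M i k * M j l ≠ M i l * M j k)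
    (d : Fin (q - 1) → Fin (q - 1) → ZMod (q - 1))
    (hd : ∀ i j, M i j = α ^ (d i j).val) :
    ∀ i j, i ≠ j → Function.Bijective (fun k : Fin (q - 1) => d i k - d j k) := by
  intro i j hij
  have h2 : 1 < q - 1 := by
    have h := i.isLt; have h' := j.isLt
    have hne : (i : ℕ) ≠ j := fun h => hij (Fin.ext h)
    omega
  haveI : NeZero (q - 1) := ⟨by omega⟩
  have hα0 : α ≠ 0 := by
    intro h0
    classical
    have hx : ∀ x : F, x = 0 ∨ x = 1 := by
      intro x
      by_cases hx0 : x = 0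
      · exact Or.inl hx0
      · obtain ⟨n, hn⟩ := hα x hx0
        rcases Nat.eq_zero_or_pos n with hn0 | hn0
        · right; rw [hn0, pow_zero] at hn; exact hn.symm
        · exfalso; apply hx0; rw [← hn, h0, zero_pow (by omega)]
    have hsub : (Finset.univ : Finset F) ⊆ {0, 1} := by
      intro x _
      rcases hx x with h | h <;> simp [h]
    have hle := Finset.card_le_card hsub
    have h01 : ({0, 1} : Finset F).card ≤ 2 := Finset.card_insert_le _ _ |>.trans (by simp)
    rw [Finset.card_univ, hcard] at hle
    omega
  have hord : α ^ (q - 1) = 1 := by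
    have h := FiniteField.pow_card_sub_one_eq_one α hα0
    rwa [hcard] at h
  have key : ∀ s t : ℕ, s % (q - 1) = t % (q - 1) → α ^ s = α ^ t := by
    intro s t h
    rw [pow_eq_pow_mod s hord, pow_eq_pow_mod t hord, h]
  have hinj : Function.Injective (fun k : Fin (q - 1) => d i k - d j k) := by
    intro k l h
    by_contra hkl
    apply h22 i j k l hij hkl
    have heq : d i k + d j l = d i l + d j k := by
      simp only at h
      exact sub_eq_sub_iff_add_eq_add.mp h
    rw [hd, hd, hd, hd, ← pow_add, ← pow_add]
    apply key
    have hv := congrArg ZMod.val heq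
    rwa [ZMod.val_add, ZMod.val_add] at hv
  exact (Fintype.bijective_iff_injective_and_card _).mpr ⟨hinj, by simp [ZMod.card]⟩
end

section
/- Let g be a positive integer and suppose D is a (g, g; 1)-difference matrix over Z_g (entries in Z_g, any two distinct rows have componentwise differences forming a bijection onto Z_g), where g = q−1 for a prime power q. Fix a primitive element α of F_q and define M = (α^{d_{i,j}}). Then every entry of M is nonzero and every 2×2 submatrix of M is invertible. -/
/-- If D is a (g,g;1)-difference matrix over Z_g with g = q-1 for a prime power q,
and α is a primitive element of F_q, then M = (α^{d_{i,j}}) has all entries nonzero and all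
2×2 submatrices invertible. -/
theorem stmt3 {q g : ℕ} (hg : 0 < g) (hgq : g = q - 1)
    (F : Type) [Field F] [Fintype F] (hcard : Fintype.card F = q)
    (α : F) (hα : ∀ x : F, x ≠ 0 → ∃ n : ℕ, α ^ n = x)
    (D : Fin g → Fin g → ZMod g)
    (hD : ∀ i j, i ≠ j → Function.Bijective (fun k : Fin g => D i k - D j k))
    (M : Matrix (Fin g) (Fin g) F)
    (hM : ∀ i j, M i j = α ^ (D i j).val) :
    (∀ i j, M i j ≠ 0) ∧
    (∀ i j k l, i ≠ j → k ≠ l → M i k * M j l ≠ M i l * M j k) := by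
  classical
  haveI : NeZero g := ⟨hg.ne'⟩
  by_cases hg1 : g = 1
  · constructor
    · intro i j
      have hv : (D i j).val = 0 := by
        have := ZMod.val_lt (D i j); omega
      rw [hM, hv, pow_zero]; exact one_ne_zero
    · intro i j k l hij _
      exact absurd (by subst hg1; exact Subsingleton.elim i j) hij
  · -- g ≥ 2, hence q ≥ 3
    have hq3 : 3 ≤ q := by omega
    have hα0 : α ≠ 0 := by
      intro h0
      have hall : ∀ x : F, x = 0 ∨ x = 1 := by
        intro x
        by_cases hx : x = 0
        · exact Or.inl hx
        · obtain ⟨n, hn⟩ := hα x hx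
          cases n with
          | zero => right; simpa using hn.symm
          | succ m => exfalso; apply hx; rw [← hn, h0, zero_pow (Nat.succ_ne_zero m)]
      have hle : Fintype.card F ≤ 2 := by
        have hsub : (Finset.univ : Finset F) ⊆ {0, 1} := by
          intro x _
          rcases hall x with h | h <;> simp [h]
        calc Fintype.card F = (Finset.univ : Finset F).card := rfl
          _ ≤ ({0, 1} : Finset F).card := Finset.card_le_card hsub
          _ ≤ 2 := Finset.card_insert_le _ _ |>.trans (by simp)
      omega
    set u : Fˣ := Units.mk0 α hα0 with hu
    have horder : orderOf u = g := by
      have h1 : ∀ v : Fˣ, v ∈ Subgroup.zpowers u := by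
        intro v
        obtain ⟨n, hn⟩ := hα v.val v.ne_zero
        refine ⟨(n : ℤ), ?_⟩
        show u ^ (n : ℤ) = v
        rw [zpow_natCast]
        exact Units.ext (by simp [hu, hn])
      rw [orderOf_eq_card_of_forall_mem_zpowers h1, Nat.card_eq_fintype_card, Fintype.card_units, hcard]
      omega
    have hpow : ∀ a b : ℕ, α ^ a = α ^ b → (a : ZMod g) = (b : ZMod g) := by
      intro a b hab
      have hu' : u ^ a = u ^ b := Units.ext (by simpa [hu] using hab)
      have hmod : a ≡ b [MOD g] := by
        rw [← horder]; exact (pow_eq_pow_iff_modEq).mp hu'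
      exact (ZMod.natCast_eq_natCast_iff _ _ _).mpr hmod
    constructor
    · intro i j; rw [hM]; exact pow_ne_zero _ hα0
    · intro i j k l hij hkl hEq
      rw [hM, hM, hM, hM, ← pow_add, ← pow_add] at hEq
      have hcast := hpow _ _ hEq
      push_cast at hcast
      simp only [ZMod.natCast_val, ZMod.cast_id] at hcast
      have key : D i k - D j k = D i l - D j l := by linear_combination hcast
      exact hkl ((hD i j hij).injective key)
end

section
/- Let q be a prime power and let M be an invertible s×s matrix over F_q such that every t×t submatrix of M is invertible, where 1 ≤ t ≤ s. Then every (s−t)×(s−t) submatrix of M^{-1} is invertible. -/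
open Matrix

/-- If M is an invertible s×s matrix over F_q such that every t×t submatrix
of M is invertible (1 ≤ t ≤ s), then every (s−t)×(s−t) submatrix of M⁻¹ is invertible. -/
theorem stmt5 {q s t : ℕ} (F : Type) [Field F] [Fintype F] (hcard : Fintype.card F = q)
    (ht1 : 1 ≤ t) (hts : t ≤ s)
    (M : Matrix (Fin s) (Fin s) F) (hM : IsUnit M.det)
    (hsub : ∀ r c : Fin t → Fin s, Function.Injective r → Function.Injective c →
      IsUnit ((M.submatrix r c).det)) :
    ∀ r c : Fin (s - t) → Fin s, Function.Injective r → Function.Injective c →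
      IsUnit (((M⁻¹).submatrix r c).det) := by
  intro r c hr hc
  rw [isUnit_iff_ne_zero]
  intro hdet
  -- get a nonzero kernel vector x of the submatrix
  obtain ⟨x, hx0, hx⟩ := (Matrix.exists_mulVec_eq_zero_iff).2 hdet
  -- complements of the ranges of r and c
  have hrcard : ((Finset.univ.image r)ᶜ : Finset (Fin s)).card = t := by
    rw [Finset.card_compl, Finset.card_image_of_injective _ hr]
    simp [Nat.sub_sub_self hts]
  have hccard : ((Finset.univ.image c)ᶜ : Finset (Fin s)).card = t := by
    rw [Finset.card_compl, Finset.card_image_of_injective _ hc]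
    simp [Nat.sub_sub_self hts]
  set r' : Fin t → Fin s :=
    ⇑(((Finset.univ.image r)ᶜ : Finset (Fin s)).orderEmbOfFin hrcard) with hr'def
  set c' : Fin t → Fin s :=
    ⇑(((Finset.univ.image c)ᶜ : Finset (Fin s)).orderEmbOfFin hccard) with hc'def
  have hr' : Function.Injective r' := (Finset.orderEmbOfFin _ hrcard).injective
  have hc' : Function.Injective c' := (Finset.orderEmbOfFin _ hccard).injective
  -- the complement of the range of r is the image of r'
  have himgr : ((Finset.univ.image r)ᶜ : Finset (Fin s)) = Finset.univ.image r' := by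
    apply (Finset.eq_of_subset_of_card_le ?_ ?_).symm
    · intro i hi
      obtain ⟨j, _, rfl⟩ := Finset.mem_image.1 hi
      exact Finset.orderEmbOfFin_mem _ hrcard j
    · rw [hrcard, Finset.card_image_of_injective _ hr']
      simp
  -- lift x to y on Fin s, supported on range c
  set y : Fin s → F := fun i => ∑ j, if c j = i then x j else 0 with hy
  have hyc : ∀ j, y (c j) = x j := by
    intro j
    rw [hy]
    simp only
    rw [Finset.sum_eq_single j]
    · simp
    · intro b _ hb
      have : c b ≠ c j := fun h => hb (hc h)
      simp [this]
    · simp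
  have hyc' : ∀ i, i ∉ Finset.univ.image c → y i = 0 := by
    intro i hi
    rw [hy]
    apply Finset.sum_eq_zero
    intro j _
    have : c j ≠ i := by
      intro h; exact hi (Finset.mem_image.2 ⟨j, Finset.mem_univ _, h⟩)
    simp [this]
  set z : Fin s → F := M⁻¹ *ᵥ y with hz
  have hMz : M *ᵥ z = y := by
    rw [hz, Matrix.mulVec_mulVec, Matrix.mul_nonsing_inv _ hM, Matrix.one_mulVec]
  -- z vanishes on range r
  have hzr : ∀ m, z (r m) = 0 := by
    intro m
    have hx' := congrFun hx m
    simp only [Matrix.mulVec, dotProduct, Matrix.submatrix_apply,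
      Pi.zero_apply] at hx'
    have hzm : z (r m) = ∑ j, M⁻¹ (r m) (c j) * x j := by
      rw [hz]
      simp only [Matrix.mulVec, dotProduct, hy, Finset.mul_sum, mul_ite, mul_zero]
      rw [Finset.sum_comm]
      apply Finset.sum_congr rfl
      intro j _
      rw [Finset.sum_ite_eq]
      simp
    rw [hzm, hx']
  -- the t×t system: (M.submatrix c' r') *ᵥ (z ∘ r') = 0
  have hsys : (M.submatrix c' r') *ᵥ (z ∘ r') = 0 := by
    funext m
    have hy0 : y (c' m) = 0 := by
      apply hyc'
      exact Finset.mem_compl.1 (Finset.orderEmbOfFin_mem _ hccard m)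
    have hMzm : (M *ᵥ z) (c' m) = 0 := by rw [hMz]; exact hy0
    simp only [Matrix.mulVec, dotProduct, Matrix.submatrix_apply,
      Function.comp, Pi.zero_apply] at hMzm ⊢
    rw [← hMzm]
    -- split the sum over Fin s into range r and its complement
    rw [← Finset.sum_add_sum_compl (Finset.univ.image r)
      (fun k => M (c' m) k * z k)]
    have h1 : ∑ k ∈ Finset.univ.image r, M (c' m) k * z k = 0 := by
      apply Finset.sum_eq_zero
      intro k hk
      obtain ⟨j, _, rfl⟩ := Finset.mem_image.1 hk
      rw [hzr j, mul_zero]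
    rw [h1, zero_add, himgr, Finset.sum_image (fun a _ b _ h => hr' h)]
  -- deduce z ∘ r' = 0
  have hdet' := hsub c' r' hc' hr'
  have hzr' : (z ∘ r') = 0 := by
    by_contra hne
    have : (M.submatrix c' r').det = 0 :=
      Matrix.exists_mulVec_eq_zero_iff.1 ⟨z ∘ r', hne, hsys⟩
    rw [this] at hdet'
    exact (isUnit_iff_ne_zero.1 hdet') rfl
  -- hence z = 0 everywhere
  have hz0 : z = 0 := by
    funext i
    by_cases hi : i ∈ Finset.univ.image r
    · obtain ⟨j, _, rfl⟩ := Finset.mem_image.1 hi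
      exact hzr j
    · have hi' : i ∈ ((Finset.univ.image r)ᶜ : Finset (Fin s)) := Finset.mem_compl.2 hi
      rw [himgr] at hi'
      obtain ⟨j, _, rfl⟩ := Finset.mem_image.1 hi'
      exact congrFun hzr' j
  -- then y = 0 and so x = 0, contradiction
  have hy0 : y = 0 := by rw [← hMz, hz0, Matrix.mulVec_zero]
  apply hx0
  funext j
  have := hyc j
  rw [hy0] at this
  simpa using this.symm
end

section
/- Let φ: Γ^s → Γ^s be a bijection on s-tuples over an alphabet Γ of size v, and let 1 ≤ t ≤ s. Then φ is a (t,s,v)-AONT if and only if φ^{-1} is an (s−t,s,v)-AONT. -/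
/-- `φ` is a (t,s,v)-AONT (as a bijection on s-tuples over `Γ`, with `|Γ| = v`):
for every t-subset `I` of input coordinates and (s−t)-subset `J` of output coordinates,
the array with rows (x, φ(x)) is unbiased with respect to `I ∪ J`. -/
def IsAONT {s : ℕ} (v t : ℕ) {Γ : Type*} [Fintype Γ] [DecidableEq Γ]
    (φ : (Fin s → Γ) → (Fin s → Γ)) : Prop :=
  ∀ I J : Finset (Fin s), I.card = t → J.card = s - t →
    ∀ a b : Fin s → Γ,
      (Finset.univ.filter
        (fun x : Fin s → Γ => (∀ i ∈ I, x i = a i) ∧ (∀ j ∈ J, φ x j = b j))).card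
        = v ^ s / v ^ (I.card + J.card)

lemma aont_count_swap {s : ℕ} {Γ : Type*} [Fintype Γ] [DecidableEq Γ]
    (ψ : (Fin s → Γ) ≃ (Fin s → Γ)) (I J : Finset (Fin s)) (a b : Fin s → Γ) :
    (Finset.univ.filter
      (fun x : Fin s → Γ => (∀ i ∈ I, x i = a i) ∧ (∀ j ∈ J, ψ x j = b j))).card
    = (Finset.univ.filter
      (fun y : Fin s → Γ => (∀ j ∈ J, y j = b j) ∧ (∀ i ∈ I, ψ.symm y i = a i))).card := by
  apply Finset.card_bij (fun x _ => ψ x)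
  · intro x hx
    simp only [Finset.mem_filter, Finset.mem_univ, true_and] at hx ⊢
    exact ⟨hx.2, fun i hi => by simpa using hx.1 i hi⟩
  · intro x hx y hy h
    exact ψ.injective h
  · intro y hy
    simp only [Finset.mem_filter, Finset.mem_univ, true_and] at hy
    exact ⟨ψ.symm y, Finset.mem_filter.2 ⟨Finset.mem_univ _,
      ⟨hy.2, fun j hj => by simpa using hy.1 j hj⟩⟩, (ψ.apply_symm_apply y)⟩

/-- A bijection φ on Γ^s is a (t,s,v)-AONT iff φ⁻¹ is an (s−t,s,v)-AONT. -/
theorem stmt7 {s t v : ℕ} (Γ : Type*) [Fintype Γ] [DecidableEq Γ]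
    (hv : Fintype.card Γ = v) (ht1 : 1 ≤ t) (hts : t ≤ s)
    (φ : (Fin s → Γ) ≃ (Fin s → Γ)) :
    IsAONT v t (φ : (Fin s → Γ) → (Fin s → Γ)) ↔
      IsAONT v (s - t) (φ.symm : (Fin s → Γ) → (Fin s → Γ)) := by
  constructor
  · intro h I J hI hJ a b
    have hJ' : J.card = t := by rw [hJ, Nat.sub_sub_self hts]
    rw [aont_count_swap φ.symm I J a b]
    simp only [Equiv.symm_symm]
    rw [h J I hJ' hI b a, add_comm]
  · intro h I J hI hJ a b
    have hI' : I.card = s - (s - t) := by rw [hI, Nat.sub_sub_self hts]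
    rw [aont_count_swap φ I J a b, h J I hJ hI' b a, add_comm]
end

section
/- Let q be a prime power and let N be an s×n matrix over F_q (s ≤ n). Then the map x ↦ xN from F_q^s to F_q^n defines a linear (t,s,n,q)-rectangular AONT if and only if every s×s submatrix of N is invertible and every (s−t)×(s−t) submatrix of N is invertible. -/
/-!
The array has rows `x [I | N]`. Since it has `q ^ s` rows, it is unbiased on a set `D` of `s`
columns exactly when `x ↦ (x [I | N])|_D` is a bijection `F^s → F^D`, i.e. when the columns of
`[I | N]` indexed by `D` form an invertible matrix. If `D` consists of the identity columns
`e_i` for `i` in a set `P` of rows, together with columns `C` of `N`, then listing the rows in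
`P` first turns that matrix into a block upper triangular one with an identity block, so its
determinant is the minor of `N` on the rows outside `P` and the columns `C`.
-/

/-- An array `A` is unbiased with respect to a set `D` of columns if every tuple of values
on `D` occurs in exactly `(number of rows) / v ^ |D|` rows. -/
def IsUnbiased {R : Type*} [Fintype R] {k : ℕ} {Γ : Type*} [DecidableEq Γ]
    (v : ℕ) (A : R → Fin k → Γ) (D : Finset (Fin k)) : Prop :=
  ∀ f : Fin k → Γ,
    (Finset.univ.filter (fun r => ∀ c ∈ D, A r c = f c)).card = Fintype.card R / v ^ D.card

/-- A (t,s,n,v)-rectangular AONT: an array on s+n columns (the first s are "input" columns,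
the last n are "output" columns) unbiased w.r.t. (1) the first s columns, (2) any s of the
last n columns, and (3) any t input columns together with any s−t output columns. -/
def IsRecAONT {R : Type*} [Fintype R] {Γ : Type*} [DecidableEq Γ]
    (v s n t : ℕ) (A : R → Fin (s + n) → Γ) : Prop :=
  IsUnbiased v A (Finset.univ.filter (fun j : Fin (s + n) => (j : ℕ) < s)) ∧
  (∀ J ⊆ Finset.univ.filter (fun j : Fin (s + n) => s ≤ (j : ℕ)),
      J.card = s → IsUnbiased v A J) ∧
  (∀ I ⊆ Finset.univ.filter (fun j : Fin (s + n) => (j : ℕ) < s),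
    ∀ J ⊆ Finset.univ.filter (fun j : Fin (s + n) => s ≤ (j : ℕ)),
      I.card = t → J.card = s - t → IsUnbiased v A (I ∪ J))

open Function Finset Matrix

theorem isUnbiased_iff_bijective_comp {R Γ ι : Type*} [Fintype R] [Fintype Γ] [DecidableEq Γ]
    [Nonempty Γ] [Fintype ι] {k : ℕ} (A : R → Fin k → Γ) {σ : ι → Fin k} (hσ : Injective σ)
    {D : Finset (Fin k)} (hσD : ∀ i, σ i ∈ D) (hD : #D = Fintype.card ι)
    (hR : Fintype.card R = Fintype.card Γ ^ Fintype.card ι) :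
    IsUnbiased (Fintype.card Γ) A D ↔ Bijective fun r => A r ∘ σ := by
  have hDσ : univ.image σ = D := eq_of_subset_of_card_le (by simpa [subset_iff] using hσD)
    (by rw [card_image_of_injective _ hσ, hD, card_univ])
  have hfiber : ∀ f r, (∀ c ∈ D, A r c = f c) ↔ A r ∘ σ = f ∘ σ := by
    simp [← hDσ, funext_iff]
  have hpos : 0 < Fintype.card R := hR ▸ pow_pos Fintype.card_pos _
  simp only [IsUnbiased, hfiber, hD, ← hR, Nat.div_self hpos]
  simp only [card_eq_one_iff_existsUnique, mem_filter, mem_univ, true_and]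
  rw [bijective_iff_existsUnique, hσ.surjective_comp_right.forall]

theorem bijective_vecMul_comp_iff {K m ι κ : Type*} [Field K] [Fintype m] [Fintype ι]
    [DecidableEq ι] (B : Matrix m κ K) (e : ι ≃ m) (σ : ι → κ) :
    Bijective (fun x => (x ᵥ* B) ∘ σ) ↔ IsUnit (B.submatrix e σ).det := by
  have h : (fun x => (x ᵥ* B) ∘ σ) =
      (fun y => y ᵥ* B.submatrix e σ) ∘ (e.arrowCongr (.refl K)).symm := by
    ext x i; simp [submatrix_vecMul_equiv, Function.comp_def]
  rw [h, Equiv.bijective_comp, ← isUnit_iff_isUnit_det]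
  exact ⟨fun h => vecMul_injective_iff_isUnit.mp h.injective,
    fun h => ⟨vecMul_injective_iff_isUnit.mpr h, vecMul_surjective_iff_isUnit.mpr h⟩⟩

theorem fromCols_one_submatrix_sumMap {R m n a b : Type*} [Zero R] [One R] [DecidableEq m]
    [DecidableEq a] (N : Matrix m n R) (e : a ⊕ b ≃ m) (c : b → n) :
    (fromCols 1 N).submatrix e (Sum.map (e ∘ .inl) c) =
      fromBlocks 1 (N.submatrix (e ∘ .inl) c) 0 (N.submatrix (e ∘ .inr) c) := by
  ext (i | i) (j | j) <;> simp [one_apply, e.injective.eq_iff]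

theorem Fin.map_castAddEmb_univ (m n : ℕ) :
    univ.map (Fin.castAddEmb n) = univ.filter (fun j : Fin (m + n) => (j : ℕ) < m) := by
  ext j
  simp only [mem_map, mem_univ, true_and, mem_filter, Fin.castAddEmb_apply]
  exact ⟨by rintro ⟨i, rfl⟩; exact i.isLt, fun h => ⟨j.castLT h, Fin.castAdd_castLT n j h⟩⟩

theorem Fin.map_natAddEmb_univ (m n : ℕ) :
    univ.map (Fin.natAddEmb m) = univ.filter (fun j : Fin (m + n) => m ≤ (j : ℕ)) :=
  coe_injective (by simp [Fin.range_natAdd])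

theorem Function.Injective.exists_sumEquiv_comp_inl {α β γ : Type*} [Fintype α] [Fintype β]
    [Fintype γ] {f : α → γ} (hf : Injective f) (h : Fintype.card α + Fintype.card β = Fintype.card γ) :
    ∃ e : α ⊕ β ≃ γ, e ∘ Sum.inl = f := by
  classical
  have hcompl : Fintype.card {x // x ∉ Set.range f} = Fintype.card β := by
    rw [Fintype.card_subtype_compl, Set.card_range_of_injective hf]; omega
  exact ⟨(Equiv.sumCongr (Equiv.ofInjective f hf) (Fintype.equivOfCardEq hcompl).symm).trans
    (Equiv.sumCompl _), rfl⟩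

theorem exists_injective_mem_of_subset_map {α β : Type*} {g : α ↪ β} {u : Finset α}
    {J : Finset β} {m : ℕ} (hJ : J ⊆ u.map g) (hcard : #J = m) :
    ∃ c : Fin m → α, Injective c ∧ ∀ i, g (c i) ∈ J := by
  obtain ⟨v, -, rfl⟩ := subset_map_iff.mp hJ
  rw [card_map] at hcard
  let E : v ≃ Fin m := Fintype.equivFinOfCardEq (by simpa using hcard)
  exact ⟨(↑) ∘ E.symm, Subtype.val_injective.comp E.symm.injective,
    fun i => mem_map_of_mem g (E.symm i).2⟩

theorem card_union_eq_of_subset_filter {s n : ℕ} {I J : Finset (Fin (s + n))}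
    (hI : I ⊆ univ.filter (fun j : Fin (s + n) => (j : ℕ) < s))
    (hJ : J ⊆ univ.filter (fun j : Fin (s + n) => s ≤ (j : ℕ))) : #(I ∪ J) = #I + #J :=
  card_union_of_disjoint ((disjoint_filter.2 fun _ _ h => not_le.2 h).mono hI hJ)

section Systematic

variable {F : Type*} [Field F] [Fintype F] [DecidableEq F] {s n : ℕ}

def systematicArray (N : Matrix (Fin s) (Fin n) F) : (Fin s → F) → Fin (s + n) → F :=
  fun x => (x ᵥ* fromCols 1 N) ∘ finSumFinEquiv.symm

omit [Fintype F] [DecidableEq F] in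
theorem systematicArray_eq (N : Matrix (Fin s) (Fin n) F) :
    systematicArray N = fun (x : Fin s → F) (j : Fin (s + n)) =>
      if h : (j : ℕ) < s then x ⟨j, h⟩
      else Matrix.vecMul x N ⟨(j : ℕ) - s, by have := j.isLt; omega⟩ := by
  ext x j
  refine Fin.addCases (fun i => ?_) (fun i => ?_) j <;> simp [systematicArray, vecMul_fromCols]

theorem isUnbiased_systematicArray_iff {a b : Type*} [Fintype a] [Fintype b] [DecidableEq a]
    [DecidableEq b] (N : Matrix (Fin s) (Fin n) F) (e : a ⊕ b ≃ Fin s) {c : b → Fin n}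
    (hc : Injective c) {D : Finset (Fin (s + n))} (hl : ∀ i, Fin.castAdd n (e (.inl i)) ∈ D)
    (hr : ∀ j, Fin.natAdd s (c j) ∈ D) (hD : #D = s) :
    IsUnbiased (Fintype.card F) (systematicArray N) D ↔
      IsUnit (N.submatrix (e ∘ .inr) c).det := by
  have hσ : Injective (finSumFinEquiv ∘ Sum.map (e ∘ .inl) c) :=
    finSumFinEquiv.injective.comp ((e.injective.comp Sum.inl_injective).sumMap hc)
  have hcard : Fintype.card (a ⊕ b) = s := by simpa using Fintype.card_congr e
  rw [isUnbiased_iff_bijective_comp _ hσ (by rintro (i | j) <;> simp [hl, hr])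
    (by rw [hD, hcard]) (by simp [hcard])]
  simp only [systematicArray, ← Function.comp_assoc, Function.comp_assoc _ finSumFinEquiv.symm,
    Equiv.symm_comp_self, Function.comp_id]
  rw [bijective_vecMul_comp_iff _ e, fromCols_one_submatrix_sumMap, det_fromBlocks_zero₂₁,
    det_one, one_mul]

theorem isUnbiased_systematicArray_inputs (N : Matrix (Fin s) (Fin n) F) :
    IsUnbiased (Fintype.card F) (systematicArray N)
      (univ.filter fun j : Fin (s + n) => (j : ℕ) < s) := by
  refine (isUnbiased_systematicArray_iff N (Equiv.sumEmpty _ Empty) (c := isEmptyElim)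
    (injective_of_subsingleton _) (fun i => by simp) isEmptyElim ?_).2 ?_
  · rw [← Fin.map_castAddEmb_univ, card_map, card_univ, Fintype.card_fin]
  · rw [det_isEmpty]
    exact isUnit_one

theorem isUnbiased_systematicArray_outputs_iff (N : Matrix (Fin s) (Fin n) F) :
    (∀ J ⊆ univ.filter (fun j : Fin (s + n) => s ≤ (j : ℕ)),
        #J = s → IsUnbiased (Fintype.card F) (systematicArray N) J) ↔
      ∀ c : Fin s → Fin n, Injective c → IsUnit (N.submatrix id c).det := by
  have hright := Fin.map_natAddEmb_univ s n
  constructor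
  · intro h c hc
    let J := (univ.map ⟨c, hc⟩).map (Fin.natAddEmb s)
    have hJs : #J = s := by simp [J]
    exact (isUnbiased_systematicArray_iff N (Equiv.emptySum Empty _) hc isEmptyElim
      (fun j => by simp [J]) hJs).1 (h J ((map_subset_map.2 (subset_univ _)).trans hright.le) hJs)
  · intro h J hJ hJs
    obtain ⟨c, hc, hcJ⟩ := exists_injective_mem_of_subset_map (hJ.trans hright.ge) hJs
    exact (isUnbiased_systematicArray_iff N (Equiv.emptySum Empty _) hc isEmptyElim hcJ hJs).2
      (h c hc)

theorem isUnbiased_systematicArray_mixed_iff {t : ℕ} (hts : t ≤ s)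
    (N : Matrix (Fin s) (Fin n) F) :
    (∀ I ⊆ univ.filter (fun j : Fin (s + n) => (j : ℕ) < s),
      ∀ J ⊆ univ.filter (fun j : Fin (s + n) => s ≤ (j : ℕ)),
        #I = t → #J = s - t → IsUnbiased (Fintype.card F) (systematicArray N) (I ∪ J)) ↔
      ∀ (r : Fin (s - t) → Fin s) (c : Fin (s - t) → Fin n),
        Injective r → Injective c → IsUnit (N.submatrix r c).det := by
  have hleft := Fin.map_castAddEmb_univ s n
  have hright := Fin.map_natAddEmb_univ s n
  constructor
  · intro h r c hr hc
    obtain ⟨e, he⟩ := hr.exists_sumEquiv_comp_inl (β := Fin t) (by simp only [Fintype.card_fin]; omega)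
    let I := (univ.map ⟨_, e.injective.comp Sum.inr_injective⟩).map (Fin.castAddEmb n)
    let J := (univ.map ⟨c, hc⟩).map (Fin.natAddEmb s)
    have hI : I ⊆ _ := (map_subset_map.2 (subset_univ _)).trans hleft.le
    have hJ : J ⊆ _ := (map_subset_map.2 (subset_univ _)).trans hright.le
    have hIt : #I = t := by simp [I]
    have hJt : #J = s - t := by simp [J]
    rw [← he]
    exact (isUnbiased_systematicArray_iff N ((Equiv.sumComm _ _).trans e) hc (D := I ∪ J)
      (fun i => mem_union_left _ (by simp [I])) (fun j => mem_union_right _ (by simp [J]))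
      (by rw [card_union_eq_of_subset_filter hI hJ]; omega)).1 (h I hI J hJ hIt hJt)
  · intro h I hI J hJ hIt hJt
    obtain ⟨ρ, hρ, hρI⟩ := exists_injective_mem_of_subset_map (hI.trans hleft.ge) hIt
    obtain ⟨c, hc, hcJ⟩ := exists_injective_mem_of_subset_map (hJ.trans hright.ge) hJt
    obtain ⟨e, rfl⟩ := hρ.exists_sumEquiv_comp_inl (β := Fin (s - t)) (by simp only [Fintype.card_fin]; omega)
    exact (isUnbiased_systematicArray_iff N e hc (fun i => mem_union_left _ (hρI i))
      (fun j => mem_union_right _ (hcJ j)) (by rw [card_union_eq_of_subset_filter hI hJ]; omega)).2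
      (h _ c (e.injective.comp Sum.inr_injective) hc)

end Systematic

/-- For an s×n matrix N over F_q (s ≤ n), the map x ↦ xN defines a linear
(t,s,n,q)-rectangular AONT (i.e., the q^s × (s+n) array with rows (x, xN) is a
(t,s,n,q)-recAONT) if and only if every s×s submatrix of N is invertible and every
(s−t)×(s−t) submatrix of N is invertible. -/
theorem stmt10 {q s n t : ℕ} (F : Type*) [Field F] [Fintype F] [DecidableEq F]
    (hq : Fintype.card F = q) (hts : t ≤ s)
    (N : Matrix (Fin s) (Fin n) F) :
    IsRecAONT q s n t
      (fun (x : Fin s → F) (j : Fin (s + n)) =>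
        if h : (j : ℕ) < s then x ⟨j, h⟩
        else Matrix.vecMul x N ⟨(j : ℕ) - s, by have := j.isLt; omega⟩) ↔
    ((∀ c : Fin s → Fin n, Function.Injective c →
        IsUnit ((N.submatrix id c).det)) ∧
     (∀ (r : Fin (s - t) → Fin s) (c : Fin (s - t) → Fin n),
        Function.Injective r → Function.Injective c →
        IsUnit ((N.submatrix r c).det))) := by
  subst hq
  rw [← systematicArray_eq, IsRecAONT, isUnbiased_systematicArray_outputs_iff,
    isUnbiased_systematicArray_mixed_iff hts]
  exact and_iff_right (isUnbiased_systematicArray_inputs N)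
end

section
/- Let n be a positive integer such that 2^n − 1 is prime, and let q = 2^n. Let M be the (q−1)×(q−1) Vandermonde matrix over F_q with entries m_{i,j} = α^{(i-1)(j-1)} where α is a primitive element of F_q. Then M is invertible, all entries of M are nonzero, and every 2×2 submatrix of M is invertible. Hence M defines a linear (2, 2^n − 1, 2^n)-strong AONT. -/
/-!
The primitive element `α` generates `Fˣ`, so its order is the prime `p = 2 ^ n - 1` and exponents
of `α` may be read in the field `ZMod p`. The nodes `α ^ i`, `i < p`, of the Vandermonde matrix are
then distinct, and a singular `2 × 2` minor would give `(i₁ - i₂) (j₁ - j₂) = 0` in `ZMod p`.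
-/

open Matrix

lemma Nat.modEq_or_modEq_of_mul_add_mul_modEq {p a b c d : ℕ} (hp : p.Prime)
    (h : a * c + b * d ≡ a * d + b * c [MOD p]) : a ≡ b [MOD p] ∨ c ≡ d [MOD p] := by
  have : Fact p.Prime := ⟨hp⟩
  simp only [← ZMod.natCast_eq_natCast_iff] at h ⊢
  push_cast at h
  have hfac : ((a : ZMod p) - b) * ((c : ZMod p) - d) = 0 := by linear_combination h
  rwa [_root_.mul_eq_zero, sub_eq_zero, sub_eq_zero] at hfac

section Monoid

variable {M : Type*} [Monoid M] {x : M}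

lemma pow_mul_add_pow_mul_ne {p i₁ i₂ j₁ j₂ : ℕ} (hp : p.Prime) (hx : orderOf x = p)
    (hi₁ : i₁ < p) (hi₂ : i₂ < p) (hj₁ : j₁ < p) (hj₂ : j₂ < p) (hi : i₁ ≠ i₂) (hj : j₁ ≠ j₂) :
    x ^ (i₁ * j₁ + i₂ * j₂) ≠ x ^ (i₁ * j₂ + i₂ * j₁) := by
  have hfin : IsOfFinOrder x := orderOf_pos_iff.mp (hx ▸ hp.pos)
  intro h
  rw [hfin.pow_eq_pow_iff_modEq, hx] at h
  rcases Nat.modEq_or_modEq_of_mul_add_mul_modEq hp h with h | h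
  · exact hi (Nat.ModEq.eq_of_lt_of_lt h hi₁ hi₂)
  · exact hj (Nat.ModEq.eq_of_lt_of_lt h hj₁ hj₂)

end Monoid

lemma det_vandermonde_pow_ne_zero {R : Type*} [CommRing R] [IsDomain R] {x : R} {N : ℕ}
    (hN : N ≤ orderOf x) : (vandermonde fun i : Fin N ↦ x ^ (i : ℕ)).det ≠ 0 :=
  det_vandermonde_ne_zero_iff.mpr fun i j hij ↦
    Fin.ext <| pow_injOn_Iio_orderOf (lt_of_lt_of_le i.isLt hN) (lt_of_lt_of_le j.isLt hN) hij

section GroupWithZero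

variable {G₀ : Type*} [GroupWithZero G₀] {a : G₀}

lemma ne_zero_of_forall_pow_eq [Nontrivial G₀ˣ] (h : ∀ x : G₀, x ≠ 0 → ∃ m : ℕ, a ^ m = x) :
    a ≠ 0 := by
  rintro rfl
  obtain ⟨u, hu⟩ := exists_ne (1 : G₀ˣ)
  obtain ⟨m, hm⟩ := h u u.ne_zero
  rcases m with _ | m
  · exact hu (Units.ext (by simpa using hm.symm))
  · exact u.ne_zero (by simpa using hm.symm)

lemma orderOf_eq_card_units_of_forall_pow_eq [Finite G₀] [Nontrivial G₀ˣ]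
    (h : ∀ x : G₀, x ≠ 0 → ∃ m : ℕ, a ^ m = x) : orderOf a = Nat.card G₀ˣ := by
  rw [← Units.val_mk0 (ne_zero_of_forall_pow_eq h), orderOf_units]
  refine orderOf_eq_card_of_forall_mem_powers fun u ↦ ?_
  obtain ⟨m, hm⟩ := h u u.ne_zero
  exact ⟨m, Units.ext (by simpa using hm)⟩

end GroupWithZero

theorem stmt14_general {n : ℕ} (hprime : Nat.Prime (2 ^ n - 1))
    (F : Type*) [Field F] [Fintype F] (hcard : Fintype.card F = 2 ^ n)
    (α : F) (hα : ∀ x : F, x ≠ 0 → ∃ m : ℕ, α ^ m = x)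
    (M : Matrix (Fin (2 ^ n - 1)) (Fin (2 ^ n - 1)) F)
    (hM : ∀ i j, M i j = α ^ ((i : ℕ) * (j : ℕ))) :
    IsUnit M.det ∧
    (∀ i j, M i j ≠ 0) ∧
    (∀ i1 i2 j1 j2, i1 ≠ i2 → j1 ≠ j2 →
      M i1 j1 * M i2 j2 ≠ M i1 j2 * M i2 j1) := by
  have hcard_units : Nat.card Fˣ = 2 ^ n - 1 := by
    rw [Nat.card_units, Nat.card_eq_fintype_card, hcard]
  have : Nontrivial Fˣ := Finite.one_lt_card_iff_nontrivial.mp (hcard_units ▸ hprime.one_lt)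
  have hord : orderOf α = 2 ^ n - 1 :=
    (orderOf_eq_card_units_of_forall_pow_eq hα).trans hcard_units
  have hM_eq : M = vandermonde fun i : Fin (2 ^ n - 1) ↦ α ^ (i : ℕ) := by
    ext i j
    rw [hM, vandermonde_apply, ← pow_mul]
  refine ⟨?_, fun i j ↦ ?_, fun i₁ i₂ j₁ j₂ hi hj ↦ ?_⟩
  · exact isUnit_iff_ne_zero.mpr (hM_eq ▸ det_vandermonde_pow_ne_zero hord.ge)
  · exact hM i j ▸ pow_ne_zero _ (ne_zero_of_forall_pow_eq hα)
  · simp only [hM, ← pow_add]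
    exact pow_mul_add_pow_mul_ne hprime hord i₁.isLt i₂.isLt j₁.isLt j₂.isLt
      (Fin.val_injective.ne hi) (Fin.val_injective.ne hj)

/-- Let 2^n − 1 be prime, q = 2^n, α a primitive element of F_q, and M the
(q−1)×(q−1) Vandermonde matrix with m_{i,j} = α^{(i-1)(j-1)} (0-indexed: α^{i·j}). Then M is
invertible, all its entries are nonzero, and every 2×2 submatrix of M is invertible; hence M
defines a linear (2, 2^n−1, 2^n)-strong AONT. -/
theorem stmt14 {n : ℕ} (hn : 0 < n) (hprime : Nat.Prime (2 ^ n - 1))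
    (F : Type*) [Field F] [Fintype F] (hcard : Fintype.card F = 2 ^ n)
    (α : F) (hα : ∀ x : F, x ≠ 0 → ∃ m : ℕ, α ^ m = x)
    (M : Matrix (Fin (2 ^ n - 1)) (Fin (2 ^ n - 1)) F)
    (hM : ∀ i j, M i j = α ^ ((i : ℕ) * (j : ℕ))) :
    IsUnit M.det ∧
    (∀ i j, M i j ≠ 0) ∧
    (∀ i1 i2 j1 j2, i1 ≠ i2 → j1 ≠ j2 →
      M i1 j1 * M i2 j2 ≠ M i1 j2 * M i2 j1) :=
  stmt14_general hprime F hcard α hα M hM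
end

section
/- Let q = 2^n and let ω_1,…,ω_{q−1} be the distinct nonzero elements of F_q. Consider the 3×(q+2) matrix H whose columns are (1, ω_i, ω_i^2)^T for i = 1,…,q−1, together with (1,0,0)^T, (0,1,0)^T, and (0,0,1)^T. Then any 3 distinct columns of H are linearly independent over F_q. -/
open Matrix

private def colOf {F : Type*} [Field F] : F ⊕ Fin 3 → Fin 3 → F
  | .inl a => fun i => a ^ (i : ℕ)
  | .inr t => fun i => if (i : ℕ) = (t : ℕ) then 1 else 0

private lemma aux_det {F : Type*} [Field F] (h2 : (2 : F) = 0)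
    (d : Fin 3 → F ⊕ Fin 3)
    (hnz : ∀ k a, d k = .inl a → a ≠ 0)
    (hd : Function.Injective d) :
    (Matrix.of fun i k => colOf (d k) i).det ≠ 0 := by
  have hsub : ∀ a b : F, a - b = a + b := by
    intro a b
    have h : (2 : F) * b = 0 := by rw [h2]; ring
    linear_combination -h
  have d01 : d 0 ≠ d 1 := fun h => absurd (hd h) (by decide)
  have d02 : d 0 ≠ d 2 := fun h => absurd (hd h) (by decide)
  have d12 : d 1 ≠ d 2 := fun h => absurd (hd h) (by decide)
  have ha := hnz 0
  have hb := hnz 1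
  have hc := hnz 2
  simp only [Matrix.det_fin_three, Matrix.of_apply]
  rcases h0 : d 0 with a | s <;> rcases h1 : d 1 with b | t <;> rcases h2' : d 2 with c | u <;>
    simp only [h0, h1, h2', ne_eq, Sum.inl.injEq, Sum.inr.injEq, reduceCtorEq,
      not_false_eq_true] at d01 d02 d12 <;>
    [skip; fin_cases u; fin_cases t; (fin_cases t <;> fin_cases u);
     fin_cases s; (fin_cases s <;> fin_cases u); (fin_cases s <;> fin_cases t);
     (fin_cases s <;> fin_cases t <;> fin_cases u)] <;>
    (try exact absurd rfl (by assumption)) <;>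
    simp only [colOf] <;> norm_num
  all_goals first
    | assumption
    | exact ha _ h0
    | exact hb _ h1
    | exact hc _ h2'
    | (exact fun h => (sub_ne_zero.mpr d01) (by linear_combination h))
    | (exact fun h => (pow_ne_zero 2 (sub_ne_zero.mpr d01)) (by linear_combination h + (b*b - a*b)*h2))
    | (exact fun h => (pow_ne_zero 2 (sub_ne_zero.mpr d01)) (by linear_combination h + (a*a - a*b)*h2))
    | (exact fun h => (mul_ne_zero (mul_ne_zero (ha _ h0) (hb _ h1)) (sub_ne_zero.mpr d01)) (by linear_combination h))
    | (exact fun h => (sub_ne_zero.mpr d01) (by linear_combination -h))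
    | (exact fun h => (pow_ne_zero 2 (sub_ne_zero.mpr d01)) (by linear_combination -h + (b*b - a*b)*h2))
    | (exact fun h => (pow_ne_zero 2 (sub_ne_zero.mpr d01)) (by linear_combination -h + (a*a - a*b)*h2))
    | (exact fun h => (mul_ne_zero (mul_ne_zero (ha _ h0) (hb _ h1)) (sub_ne_zero.mpr d01)) (by linear_combination -h))
    | (exact fun h => (sub_ne_zero.mpr d02) (by linear_combination h))
    | (exact fun h => (pow_ne_zero 2 (sub_ne_zero.mpr d02)) (by linear_combination h + (c*c - a*c)*h2))
    | (exact fun h => (pow_ne_zero 2 (sub_ne_zero.mpr d02)) (by linear_combination h + (a*a - a*c)*h2))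
    | (exact fun h => (mul_ne_zero (mul_ne_zero (ha _ h0) (hc _ h2')) (sub_ne_zero.mpr d02)) (by linear_combination h))
    | (exact fun h => (sub_ne_zero.mpr d02) (by linear_combination -h))
    | (exact fun h => (pow_ne_zero 2 (sub_ne_zero.mpr d02)) (by linear_combination -h + (c*c - a*c)*h2))
    | (exact fun h => (pow_ne_zero 2 (sub_ne_zero.mpr d02)) (by linear_combination -h + (a*a - a*c)*h2))
    | (exact fun h => (mul_ne_zero (mul_ne_zero (ha _ h0) (hc _ h2')) (sub_ne_zero.mpr d02)) (by linear_combination -h))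
    | (exact fun h => (sub_ne_zero.mpr d12) (by linear_combination h))
    | (exact fun h => (pow_ne_zero 2 (sub_ne_zero.mpr d12)) (by linear_combination h + (c*c - b*c)*h2))
    | (exact fun h => (pow_ne_zero 2 (sub_ne_zero.mpr d12)) (by linear_combination h + (b*b - b*c)*h2))
    | (exact fun h => (mul_ne_zero (mul_ne_zero (hb _ h1) (hc _ h2')) (sub_ne_zero.mpr d12)) (by linear_combination h))
    | (exact fun h => (sub_ne_zero.mpr d12) (by linear_combination -h))
    | (exact fun h => (pow_ne_zero 2 (sub_ne_zero.mpr d12)) (by linear_combination -h + (c*c - b*c)*h2))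
    | (exact fun h => (pow_ne_zero 2 (sub_ne_zero.mpr d12)) (by linear_combination -h + (b*b - b*c)*h2))
    | (exact fun h => (mul_ne_zero (mul_ne_zero (hb _ h1) (hc _ h2')) (sub_ne_zero.mpr d12)) (by linear_combination -h))
    | (exact fun h => (mul_ne_zero (mul_ne_zero (sub_ne_zero.mpr d01) (sub_ne_zero.mpr d02)) (sub_ne_zero.mpr d12)) (by linear_combination h))
    | (exact fun h => (mul_ne_zero (mul_ne_zero (sub_ne_zero.mpr d01) (sub_ne_zero.mpr d02)) (sub_ne_zero.mpr d12)) (by linear_combination -h))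

/-- Let q = 2^n and ω_1,…,ω_{q−1} be the distinct nonzero elements of F_q.
The 3×(q+2) matrix H with columns (1, ω_i, ω_i²)ᵀ for i = 1,…,q−1 together with
(1,0,0)ᵀ, (0,1,0)ᵀ, (0,0,1)ᵀ has any 3 distinct columns linearly independent
(equivalently, every 3×3 submatrix on distinct columns has nonzero determinant). -/
theorem stmt15 {n q : ℕ} (hn : 0 < n) (hq : q = 2 ^ n)
    (F : Type*) [Field F] [Fintype F] (hcard : Fintype.card F = q)
    (ω : Fin (q - 1) → F) (hinj : Function.Injective ω) (hnz : ∀ i, ω i ≠ 0)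
    (H : Matrix (Fin 3) (Fin (q + 2)) F)
    (hH : ∀ i j, H i j =
      if h : (j : ℕ) < q - 1 then (ω ⟨j, h⟩) ^ (i : ℕ)
      else if (j : ℕ) - (q - 1) = (i : ℕ) then 1 else 0) :
    ∀ c : Fin 3 → Fin (q + 2), Function.Injective c →
      (H.submatrix id c).det ≠ 0 := by
  -- characteristic 2
  have hq1 : 1 ≤ q := by
    subst hq; exact Nat.one_le_two_pow
  haveI : CharP F (ringChar F) := ringChar.charP F
  obtain ⟨⟨m, hm⟩, hp, hcard'⟩ := FiniteField.card F (ringChar F)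
  have hdvd : ringChar F ∣ 2 ^ n := by
    rw [← hq, ← hcard, hcard']
    exact dvd_pow_self _ hm.ne'
  have hchar : ringChar F = 2 :=
    (Nat.prime_dvd_prime_iff_eq hp Nat.prime_two).mp (hp.dvd_of_dvd_pow hdvd)
  have h2 : (2 : F) = 0 := by
    have := CharP.cast_eq_zero F (ringChar F)
    rwa [hchar] at this
  intro c hc
  have hlt : ∀ k : Fin 3, ¬ ((c k : ℕ) < q - 1) → (c k : ℕ) - (q - 1) < 3 := by
    intro k h
    have := (c k).isLt
    omega
  set d : Fin 3 → F ⊕ Fin 3 := fun k =>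
    if h : (c k : ℕ) < q - 1 then .inl (ω ⟨c k, h⟩) else .inr ⟨(c k : ℕ) - (q - 1), hlt k h⟩
    with hd_def
  have hmat : H.submatrix id c = Matrix.of fun i k => colOf (d k) i := by
    ext i k
    simp only [Matrix.submatrix_apply, id_eq, Matrix.of_apply, hd_def, hH]
    split_ifs with h h1
    · simp [colOf]
    · simp only [colOf]
      rw [if_pos h1.symm]
    · simp only [colOf]
      rw [if_neg (fun hh => h1 hh.symm)]
  rw [hmat]
  apply aux_det h2
  · intro k a hk
    simp only [hd_def] at hk
    split_ifs at hk with h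
    · exact (Sum.inl_injective hk) ▸ hnz _
    all_goals simp_all
  · intro k l hkl
    simp only [hd_def] at hkl
    split_ifs at hkl with h h' h'
    · have h4 := hinj (Sum.inl_injective hkl)
      have h5 := congrArg Fin.val h4
      exact hc (Fin.ext h5)
    · have h4 := Sum.inr_injective hkl
      have h3 : (c k : ℕ) - (q - 1) = (c l : ℕ) - (q - 1) := congrArg Fin.val h4
      apply hc; apply Fin.ext; omega
end

section
/- Let q be a prime power, 1 ≤ k ≤ q+1, and let H be the (q+1−k)×(q+1) parity check matrix of a doubly extended Reed–Solomon code of length q+1 and dimension k over F_q. Then any q+1−k distinct columns of H are linearly independent; consequently, setting t = q−k+1, there exists an invertible (q+1)×(q+1) matrix M over F_q whose first t rows form a matrix in which every t columns are linearly independent (i.e., a {1,…,t}-restricted (t, q+1, q)-AONT exists). -/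
/-- The transpose Vandermonde matrix has nonzero determinant for distinct nodes. -/
lemma stmt16_vandT_det_ne_zero {F : Type*} [Field F] {n : ℕ} (a : Fin n → F)
    (ha : Function.Injective a) :
    (Matrix.of fun i j : Fin n => a j ^ (i : ℕ)).det ≠ 0 := by
  have h : (Matrix.of fun i j : Fin n => a j ^ (i : ℕ))
      = (Matrix.vandermonde a).transpose := by
    ext i j; simp [Matrix.vandermonde]
  rw [h, Matrix.det_transpose, Matrix.det_vandermonde_ne_zero_iff]
  exact ha

/-- A square matrix whose columns are transpose-Vandermonde columns with pairwise
distinct nodes, except one column which is the last standard basis vector,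
has nonzero determinant. -/
lemma stmt16_lemB {F : Type*} [Field F] {n : ℕ} (M : Matrix (Fin n) (Fin n) F)
    (j0 : Fin n) (a : Fin n → F)
    (ha : ∀ j j', j ≠ j0 → j' ≠ j0 → a j = a j' → j = j')
    (h1 : ∀ i j, j ≠ j0 → M i j = a j ^ (i : ℕ))
    (h2 : ∀ i, M i j0 = if (i : ℕ) = n - 1 then 1 else 0) :
    M.det ≠ 0 := by
  cases n with
  | zero => exact j0.elim0
  | succ n =>
    rw [Matrix.det_succ_column M j0, Finset.sum_eq_single (Fin.last n)]
    · have hminor : (M.submatrix (Fin.last n).succAbove j0.succAbove)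
          = Matrix.of fun i j : Fin n => (a (j0.succAbove j)) ^ (i : ℕ) := by
        ext i j
        rw [Matrix.submatrix_apply, Fin.succAbove_last, h1 _ _ (Fin.succAbove_ne j0 j)]
        simp
      have h2' : M (Fin.last n) j0 = 1 := by rw [h2]; simp
      rw [hminor, h2', mul_one]
      refine mul_ne_zero (pow_ne_zero _ (neg_ne_zero.mpr one_ne_zero)) ?_
      exact stmt16_vandT_det_ne_zero _ (fun j j' hjj' =>
        (Fin.succAbove_right_injective)
          (ha _ _ (Fin.succAbove_ne j0 j) (Fin.succAbove_ne j0 j') hjj'))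
    · intro b _ hb
      have hb0 : M b j0 = 0 := by
        rw [h2, if_neg]
        simp only [Nat.add_sub_cancel]
        intro hbn
        exact hb (Fin.ext (by simp [hbn]))
      rw [hb0, mul_zero, zero_mul]
    · intro h
      exact absurd (Finset.mem_univ _) h

/-- Let q be a prime power and 1 ≤ k ≤ q+1. Let H be the (q+1−k)×(q+1)
parity check matrix of a doubly extended Reed–Solomon code of length q+1 and dimension k
over F_q (columns (1, a, …, a^{m-1})ᵀ for the q field elements a, plus (0,…,0,1)ᵀ, where
m = q+1−k). Then any q+1−k distinct columns of H are linearly independent; consequently,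
with t = q+1−k, there exists an invertible (q+1)×(q+1) matrix M over F_q in which every
t×t submatrix contained in the first t rows is invertible (a {1,…,t}-restricted
(t, q+1, q)-AONT exists). -/
theorem stmt16 {q k : ℕ} (hk1 : 1 ≤ k) (hk2 : k ≤ q + 1)
    (F : Type*) [Field F] [Fintype F] (hcard : Fintype.card F = q)
    (e : Fin q ≃ F)
    (H : Matrix (Fin (q + 1 - k)) (Fin (q + 1)) F)
    (hH : ∀ i j, H i j =
      if h : (j : ℕ) < q then (e ⟨j, h⟩) ^ (i : ℕ)
      else if (i : ℕ) = q - k then 1 else 0) :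
    (∀ c : Fin (q + 1 - k) → Fin (q + 1), Function.Injective c →
      IsUnit ((H.submatrix id c).det)) ∧
    (∃ M : Matrix (Fin (q + 1)) (Fin (q + 1)) F,
      IsUnit M.det ∧
      ∀ (r c : Fin (q + 1 - k) → Fin (q + 1)),
        Function.Injective r → Function.Injective c →
        (∀ a, (r a : ℕ) < q + 1 - k) →
        IsUnit ((M.submatrix r c).det)) := by
  have hmq : q + 1 - k ≤ q := by omega
  have part1 : ∀ c : Fin (q + 1 - k) → Fin (q + 1), Function.Injective c →
      IsUnit ((H.submatrix id c).det) := by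
    intro c hc
    rw [isUnit_iff_ne_zero]
    by_cases hall : ∀ j, (c j : ℕ) < q
    · have heq : H.submatrix id c
          = Matrix.of fun i j : Fin (q + 1 - k) => (e ⟨(c j : ℕ), hall j⟩) ^ (i : ℕ) := by
        ext i j
        rw [Matrix.submatrix_apply, id_eq, hH, dif_pos (hall j)]
        rfl
      rw [heq]
      apply stmt16_vandT_det_ne_zero
      intro j j' hjj'
      have h4 : (⟨(c j : ℕ), hall j⟩ : Fin q) = ⟨(c j' : ℕ), hall j'⟩ := e.injective hjj'
      have h5 : (c j : ℕ) = (c j' : ℕ) := by simpa using h4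
      exact hc (Fin.ext h5)
    · push_neg at hall
      obtain ⟨j0, hj0⟩ := hall
      have hcj0 : (c j0 : ℕ) = q := by
        have := (c j0).isLt; omega
      have hlt : ∀ j, j ≠ j0 → (c j : ℕ) < q := by
        intro j hj
        have h1 := (c j).isLt
        have h2 : c j ≠ c j0 := fun h => hj (hc h)
        have h3 : (c j : ℕ) ≠ q := fun h => h2 (Fin.ext (h.trans hcj0.symm))
        omega
      apply stmt16_lemB (H.submatrix id c) j0
        (fun j => if h : (c j : ℕ) < q then e ⟨(c j : ℕ), h⟩ else 0)
      · intro j j' hj hj' hjj'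
        simp only [dif_pos (hlt j hj), dif_pos (hlt j' hj')] at hjj'
        have h4 : (⟨(c j : ℕ), hlt j hj⟩ : Fin q) = ⟨(c j' : ℕ), hlt j' hj'⟩ :=
          e.injective hjj'
        have h5 : (c j : ℕ) = (c j' : ℕ) := by simpa using h4
        exact hc (Fin.ext h5)
      · intro i j hj
        rw [Matrix.submatrix_apply, id_eq, hH]
        simp only [dif_pos (hlt j hj)]
      · intro i
        rw [Matrix.submatrix_apply, id_eq, hH, dif_neg (by omega)]
        have hiff : ((i : ℕ) = q - k) ↔ ((i : ℕ) = q + 1 - k - 1) := by omega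
        simp only [hiff]
  refine ⟨part1, ?_⟩
  -- Construct M by completing H with standard basis rows
  set M : Matrix (Fin (q + 1)) (Fin (q + 1)) F :=
    Matrix.of fun i j => if h : (i : ℕ) < q + 1 - k then H ⟨(i : ℕ), h⟩ j
      else if (i : ℕ) = (j : ℕ) then 1 else 0 with hMdef
  have hmk : (q + 1 - k) + k = q + 1 := by omega
  refine ⟨M, ?_, ?_⟩
  · -- M invertible
    rw [isUnit_iff_ne_zero]
    set σ : Fin (q + 1 - k) ⊕ Fin k ≃ Fin (q + 1) :=
      finSumFinEquiv.trans (finCongr hmk) with hσ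
    set A : Matrix (Fin (q + 1 - k)) (Fin (q + 1 - k)) F :=
      Matrix.of fun i j => (e ⟨(j : ℕ), lt_of_lt_of_le j.isLt hmq⟩) ^ (i : ℕ) with hA
    set B : Matrix (Fin (q + 1 - k)) (Fin k) F :=
      Matrix.of fun i j => M (σ (Sum.inl i)) (σ (Sum.inr j)) with hB
    have hσl : ∀ i : Fin (q + 1 - k),
        σ (Sum.inl i) = Fin.castLE (by omega) i := by
      intro i; apply Fin.ext; simp [hσ]
    have hσr : ∀ j : Fin k,
        σ (Sum.inr j) = ⟨(q + 1 - k) + (j : ℕ), by omega⟩ := by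
      intro j; apply Fin.ext; simp [hσ]
    have hblocks : M.submatrix σ σ = Matrix.fromBlocks A B 0 1 := by
      ext i j
      rcases i with i | i <;> rcases j with j | j
      · rw [Matrix.submatrix_apply, hσl i, hσl j]
        simp only [hMdef, Matrix.of_apply, Matrix.fromBlocks_apply₁₁, Fin.coe_castLE]
        rw [dif_pos i.isLt, hH]
        simp only [Fin.coe_castLE]
        rw [dif_pos (lt_of_lt_of_le j.isLt hmq)]
        rfl
      · rfl
      · rw [Matrix.submatrix_apply, hσl j, hσr i]
        simp only [hMdef, Matrix.of_apply, Matrix.fromBlocks_apply₂₁, Fin.coe_castLE]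
        rw [dif_neg (by omega)]
        rw [if_neg (by have := j.isLt; omega)]
        rfl
      · rw [Matrix.submatrix_apply, hσr i, hσr j]
        simp only [hMdef, Matrix.of_apply, Matrix.fromBlocks_apply₂₂]
        rw [dif_neg (by omega)]
        by_cases hij : i = j
        · subst hij; rw [if_pos rfl]; simp
        · rw [if_neg (by intro h; exact hij (Fin.ext (by omega)))]
          rw [Matrix.one_apply_ne hij]
    have hdet : (M.submatrix σ σ).det = M.det := Matrix.det_submatrix_equiv_self σ M
    rw [← hdet, hblocks, Matrix.det_fromBlocks_zero₂₁, Matrix.det_one, mul_one]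
    apply stmt16_vandT_det_ne_zero
    intro j j' hjj'
    have h4 : (⟨(j : ℕ), lt_of_lt_of_le j.isLt hmq⟩ : Fin q)
        = ⟨(j' : ℕ), lt_of_lt_of_le j'.isLt hmq⟩ := e.injective hjj'
    have h5 : (j : ℕ) = (j' : ℕ) := by simpa using h4
    exact Fin.ext h5
  · intro r c hr hc hrv
    have hr'inj : Function.Injective (fun a => (⟨(r a : ℕ), hrv a⟩ : Fin (q + 1 - k))) := by
      intro a b hab
      have h5 : (r a : ℕ) = (r b : ℕ) := by simpa using hab
      exact hr (Fin.ext h5)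
    set σr : Equiv.Perm (Fin (q + 1 - k)) :=
      Equiv.ofBijective _ (Finite.injective_iff_bijective.mp hr'inj) with hσr
    have heq : M.submatrix r c = (H.submatrix id c).submatrix σr id := by
      ext i j
      simp only [Matrix.submatrix_apply, hMdef, Matrix.of_apply, id_eq]
      rw [dif_pos (hrv i)]
      rfl
    rw [heq, Matrix.det_permute]
    apply IsUnit.mul _ (part1 c hc)
    rcases Int.units_eq_one_or (Equiv.Perm.sign σr) with h | h <;> rw [h]
    · simp
    · simp
end

section
/- Let q be a prime power with q > 2. If there exists an invertible s×s matrix M over F_q such that every entry is nonzero and every 2×2 submatrix is invertible (a linear (2,s,q)-strong AONT), then s ≤ q − 1. -/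
/-- Let q > 2 be a prime power. If there is an invertible s×s matrix M over
F_q with all entries nonzero and all 2×2 submatrices invertible (a linear (2,s,q)-strong
AONT), then s ≤ q − 1. -/
theorem stmt18 {q s : ℕ} (hq2 : 2 < q)
    (F : Type*) [Field F] [Fintype F] (hcard : Fintype.card F = q)
    (M : Matrix (Fin s) (Fin s) F)
    (hdet : IsUnit M.det)
    (hnz : ∀ i j, M i j ≠ 0)
    (h22 : ∀ i j k l, i ≠ j → k ≠ l → M i k * M j l ≠ M i l * M j k) :
    s ≤ q - 1 := by
  classical
  rcases le_or_gt s 1 with hs | hs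
  · omega
  · have h01 : (⟨0, by omega⟩ : Fin s) ≠ ⟨1, by omega⟩ := by
      simp [Fin.ext_iff]
    set i0 : Fin s := ⟨0, by omega⟩
    set i1 : Fin s := ⟨1, by omega⟩
    have hfinj : Function.Injective
        (fun j : Fin s => Units.mk0 (M i0 j / M i1 j)
          (div_ne_zero (hnz i0 j) (hnz i1 j))) := by
      intro k l hkl
      by_contra hne
      have := h22 i0 i1 k l h01 hne
      apply this
      have heq : M i0 k / M i1 k = M i0 l / M i1 l := by
        simpa using congrArg Units.val hkl
      rw [div_eq_div_iff (hnz i1 k) (hnz i1 l)] at heq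
      exact heq
    have hcardle : Fintype.card (Fin s) ≤ Fintype.card Fˣ :=
      Fintype.card_le_of_injective _ hfinj
    rw [Fintype.card_fin, Fintype.card_units, hcard] at hcardle
    exact hcardle
end
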